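/- Let k ≥ 0 be an integer and κ > 0. If α > 0 with α ≠ √κ is a common root of F_k and F_{k+1}, then there exist distinct positive integers m ≠ n such that either α = j_{k,n} and κ/α = j_{k,m}, or α = j_{k+1,n} and κ/α = j_{k+1,m}. Conversely, each such α is a common root of F_k and F_{k+1}. -/

import Mathlib

open Real Set

noncomputable def besselJ (k : ℕ) (x : ℝ) : ℝ :=
  ∑' m : ℕ, ((-1 : ℝ) ^ m / ((Nat.factorial m : ℝ) * (Nat.factorial (m + k) : ℝ))) *
    (x / 2) ^ (2 * m + k)

/-- `j n` (for `n ≥ 1`) enumerates, in increasing order, all the positive zeros of `J_k`. -/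
def IsBesselZeros (k : ℕ) (j : ℕ → ℝ) : Prop :=
  (∀ n, 1 ≤ n → 0 < j n ∧ besselJ k (j n) = 0) ∧
  (∀ n, 1 ≤ n → j n < j (n + 1)) ∧
  (∀ x, 0 < x → besselJ k x = 0 → ∃ n, 1 ≤ n ∧ j n = x)

/-!
Write `a, b` for `J_k, J_{k+1}` at `α` and `c, d` for them at `β = κ/α`. The recurrences
`J_k' = (k/x) J_k - J_{k+1}` and `J_{k+1}' = J_k - ((k+1)/x) J_{k+1}` (read off the power series)
turn `F_k(α)` and `F_{k+1}(α)` into `α c b - β a d` and `β b c - α a d`. If both vanish, suitable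
combinations give `(α² - β²) b c = 0 = (α² - β²) a d`, so `b c = a d = 0`; since `J_k` and
`J_{k+1}` have no common positive zero, this leaves `a = c = 0` or `b = d = 0`.

There is no common zero because `(J_k, J_{k+1})` solves a linear first-order system on `(0, ∞)`:
by uniqueness, a common zero `x₀` forces `J_k = 0` on `(0, x₀]`; descending through the second
recurrence then gives `J_0 = 0` there, against `J_0(0) = 1`.
-/

open Filter Topology
open scoped Nat

noncomputable def besselCoeff (k m : ℕ) : ℝ :=
  (-1 : ℝ) ^ m / ((m ! : ℝ) * ((m + k)! : ℝ))

noncomputable def besselTerm (k : ℕ) (x : ℝ) (m : ℕ) : ℝ :=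
  besselCoeff k m * (x / 2) ^ (2 * m + k)

-- Not `(n / x) * (x / 2) ^ n`: the termwise derivative must also make sense at `x = 0`.
noncomputable def besselTermDeriv (k : ℕ) (x : ℝ) (m : ℕ) : ℝ :=
  besselCoeff k m * ((2 * m + k : ℕ) / 2 * (x / 2) ^ (2 * m + k - 1))

theorem besselJ_eq_tsum (k : ℕ) (x : ℝ) : besselJ k x = ∑' m, besselTerm k x m := rfl

theorem abs_besselCoeff_le (k m : ℕ) : |besselCoeff k m| ≤ 1 / m ! := by
  rw [besselCoeff, abs_div, abs_pow, abs_neg, abs_one, one_pow, abs_of_pos (by positivity)]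
  gcongr
  exact le_mul_of_one_le_right (by positivity) (mod_cast Nat.factorial_pos _)

theorem besselCoeff_succ_order (k m : ℕ) :
    ((m : ℝ) + k + 1) * besselCoeff (k + 1) m = besselCoeff k m := by
  rw [besselCoeff, besselCoeff, ← add_assoc, Nat.factorial_succ]
  push_cast
  field_simp

theorem besselCoeff_succ (k m : ℕ) :
    ((m : ℝ) + 1) * besselCoeff k (m + 1) = -besselCoeff (k + 1) m := by
  rw [besselCoeff, besselCoeff, Nat.factorial_succ, add_right_comm, ← add_assoc, pow_succ]
  push_cast
  field_simp

theorem besselTerm_succ_order (k : ℕ) (x : ℝ) (m : ℕ) :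
    ((m : ℝ) + k + 1) * besselTerm (k + 1) x m = x / 2 * besselTerm k x m := by
  rw [besselTerm, besselTerm, ← mul_assoc, besselCoeff_succ_order, ← add_assoc, pow_succ]
  ring

theorem besselTerm_succ (k : ℕ) (x : ℝ) (m : ℕ) :
    ((m : ℝ) + 1) * besselTerm k x (m + 1) = -(x / 2) * besselTerm (k + 1) x m := by
  rw [besselTerm, besselTerm, ← mul_assoc, besselCoeff_succ,
    show 2 * (m + 1) + k = 2 * m + (k + 1) + 1 by ring, pow_succ]
  ring

theorem hasDerivAt_half_pow (n : ℕ) (x : ℝ) :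
    HasDerivAt (fun y : ℝ => (y / 2) ^ n) (n / 2 * (x / 2) ^ (n - 1)) x :=
  (((hasDerivAt_id' x).div_const 2).fun_pow n).congr_deriv (by ring)

theorem half_mul_half_pow_pred {x : ℝ} (hx : x ≠ 0) (n : ℕ) :
    n / 2 * (x / 2) ^ (n - 1) = n / x * (x / 2) ^ n := by
  cases n with
  | zero => simp
  | succ n =>
    rw [Nat.add_sub_cancel, pow_succ]
    field_simp

theorem abs_half_pow_le {x R : ℝ} (hx : |x| ≤ R) (n : ℕ) : |(x / 2) ^ n| ≤ (2 * R) ^ n := by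
  rw [abs_pow]
  gcongr
  rw [abs_div, abs_two]
  linarith [abs_nonneg x]

theorem abs_half_mul_half_pow_pred_le {x R : ℝ} (hR : 1 ≤ R) (hx : |x| ≤ R) (n : ℕ) :
    |n / 2 * (x / 2) ^ (n - 1)| ≤ (2 * R) ^ n := by
  have hxR : |x / 2| ≤ R := by
    rw [abs_div, abs_two]
    linarith [abs_nonneg x]
  have hn : (n : ℝ) / 2 ≤ 2 ^ n := by
    have : (n : ℝ) < 2 ^ n := mod_cast Nat.lt_two_pow_self
    linarith
  rw [abs_mul, abs_pow, abs_of_nonneg (by positivity : (0 : ℝ) ≤ n / 2), mul_pow]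
  gcongr
  calc |x / 2| ^ (n - 1) ≤ R ^ (n - 1) := by gcongr
    _ ≤ R ^ n := pow_le_pow_right₀ hR (Nat.sub_le n 1)

theorem summable_pow_two_mul_add_div_factorial (k : ℕ) (r : ℝ) :
    Summable fun m : ℕ => r ^ (2 * m + k) / m ! := by
  refine ((Real.summable_pow_div_factorial (r ^ 2)).mul_left (r ^ k)).congr fun m => ?_
  rw [pow_add, pow_mul]
  ring

theorem abs_besselTerm_le (k : ℕ) {x R : ℝ} (hx : |x| ≤ R) (m : ℕ) :
    |besselTerm k x m| ≤ (2 * R) ^ (2 * m + k) / m ! := by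
  rw [besselTerm, abs_mul, ← one_div_mul_eq_div (m ! : ℝ)]
  exact mul_le_mul (abs_besselCoeff_le k m) (abs_half_pow_le hx _) (abs_nonneg _) (by positivity)

theorem abs_besselTermDeriv_le (k : ℕ) {x R : ℝ} (hR : 1 ≤ R) (hx : |x| ≤ R) (m : ℕ) :
    |besselTermDeriv k x m| ≤ (2 * R) ^ (2 * m + k) / m ! := by
  rw [besselTermDeriv, abs_mul, ← one_div_mul_eq_div (m ! : ℝ)]
  exact mul_le_mul (abs_besselCoeff_le k m) (abs_half_mul_half_pow_pred_le hR hx _)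
    (abs_nonneg _) (by positivity)

theorem summable_besselTerm (k : ℕ) (x : ℝ) : Summable (besselTerm k x) :=
  .of_norm_bounded (summable_pow_two_mul_add_div_factorial k (2 * |x|))
    (abs_besselTerm_le k le_rfl)

theorem hasDerivAt_besselJ_tsum (k : ℕ) (x : ℝ) :
    HasDerivAt (besselJ k) (∑' m, besselTermDeriv k x m) x := by
  have hR : 1 ≤ |x| + 1 := by linarith [abs_nonneg x]
  have hball : ∀ y ∈ Metric.ball (0 : ℝ) (|x| + 1), |y| ≤ |x| + 1 := fun y hy => by
    simpa using (Metric.mem_ball.1 hy).le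
  exact hasDerivAt_tsum_of_isPreconnected (summable_pow_two_mul_add_div_factorial k _)
    Metric.isOpen_ball (convex_ball 0 _).isPreconnected
    (fun m y _ => (hasDerivAt_half_pow _ y).const_mul (besselCoeff k m))
    (fun m y hy => abs_besselTermDeriv_le k hR (hball y hy) m)
    (Metric.mem_ball_self (by positivity)) (summable_besselTerm k 0) (by simp)

theorem continuous_besselJ (k : ℕ) : Continuous (besselJ k) :=
  continuous_iff_continuousAt.2 fun x => (hasDerivAt_besselJ_tsum k x).continuousAt

theorem besselJ_zero_zero : besselJ 0 0 = 1 := by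
  rw [besselJ_eq_tsum, tsum_eq_single 0 fun m hm => by simp [besselTerm, hm]]
  simp [besselTerm, besselCoeff]

theorem tsum_besselTermDeriv (k : ℕ) {x : ℝ} (hx : x ≠ 0) :
    ∑' m, besselTermDeriv k x m = (∑' m, ((2 * m + k : ℕ) : ℝ) * besselTerm k x m) / x := by
  rw [← tsum_div_const]
  congr 1
  ext m
  rw [besselTermDeriv, half_mul_half_pow_pred hx, besselTerm]
  ring

theorem summable_nat_mul_besselTerm (k : ℕ) (x : ℝ) :
    Summable fun m : ℕ => (m : ℝ) * besselTerm k x m := by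
  rw [← summable_nat_add_iff 1]
  refine ((summable_besselTerm (k + 1) x).mul_left (-(x / 2))).congr fun m => ?_
  push_cast
  exact (besselTerm_succ k x m).symm

theorem tsum_nat_mul_besselTerm (k : ℕ) (x : ℝ) :
    ∑' m : ℕ, (m : ℝ) * besselTerm k x m = -(x / 2) * besselJ (k + 1) x := by
  rw [(summable_nat_mul_besselTerm k x).tsum_eq_zero_add, Nat.cast_zero, zero_mul, zero_add]
  push_cast
  simp_rw [besselTerm_succ]
  rw [tsum_mul_left, besselJ_eq_tsum]

theorem tsum_mul_besselTerm (k : ℕ) (x : ℝ) :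
    ∑' m, ((2 * m + k : ℕ) : ℝ) * besselTerm k x m = k * besselJ k x - x * besselJ (k + 1) x := by
  have hterm : ∀ m : ℕ, ((2 * m + k : ℕ) : ℝ) * besselTerm k x m =
      k * besselTerm k x m + 2 * ((m : ℝ) * besselTerm k x m) := fun m => by
    push_cast
    ring
  rw [tsum_congr hterm, Summable.tsum_add ((summable_besselTerm k x).mul_left _)
    ((summable_nat_mul_besselTerm k x).mul_left _), tsum_mul_left, tsum_mul_left,
    tsum_nat_mul_besselTerm, ← besselJ_eq_tsum]
  ring

theorem tsum_mul_besselTerm_succ (k : ℕ) (x : ℝ) :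
    ∑' m, ((2 * m + (k + 1) : ℕ) : ℝ) * besselTerm (k + 1) x m =
      x * besselJ k x - (k + 1) * besselJ (k + 1) x := by
  have hterm : ∀ m : ℕ, ((2 * m + (k + 1) : ℕ) : ℝ) * besselTerm (k + 1) x m =
      x * besselTerm k x m - (k + 1) * besselTerm (k + 1) x m := fun m => by
    push_cast
    linear_combination 2 * besselTerm_succ_order k x m
  rw [tsum_congr hterm, Summable.tsum_sub ((summable_besselTerm k x).mul_left _)
    ((summable_besselTerm (k + 1) x).mul_left _), tsum_mul_left, tsum_mul_left]
  rfl

theorem hasDerivAt_besselJ (k : ℕ) {x : ℝ} (hx : x ≠ 0) :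
    HasDerivAt (besselJ k) (k / x * besselJ k x - besselJ (k + 1) x) x := by
  refine (hasDerivAt_besselJ_tsum k x).congr_deriv ?_
  rw [tsum_besselTermDeriv k hx, tsum_mul_besselTerm]
  field_simp

theorem hasDerivAt_besselJ_succ (k : ℕ) {x : ℝ} (hx : x ≠ 0) :
    HasDerivAt (besselJ (k + 1)) (besselJ k x - (k + 1) / x * besselJ (k + 1) x) x := by
  refine (hasDerivAt_besselJ_tsum (k + 1) x).congr_deriv ?_
  rw [tsum_besselTermDeriv (k + 1) hx, tsum_mul_besselTerm_succ]
  field_simp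

theorem cross_deriv_besselJ_eq (k : ℕ) {α β : ℝ} (hα : α ≠ 0) (hβ : β ≠ 0) :
    β * besselJ k α * deriv (besselJ k) β - α * besselJ k β * deriv (besselJ k) α =
      α * besselJ k β * besselJ (k + 1) α - β * besselJ k α * besselJ (k + 1) β := by
  rw [(hasDerivAt_besselJ k hβ).deriv, (hasDerivAt_besselJ k hα).deriv]
  field_simp
  ring

theorem cross_deriv_besselJ_succ_eq (k : ℕ) {α β : ℝ} (hα : α ≠ 0) (hβ : β ≠ 0) :
    β * besselJ (k + 1) α * deriv (besselJ (k + 1)) β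
        - α * besselJ (k + 1) β * deriv (besselJ (k + 1)) α =
      β * besselJ (k + 1) α * besselJ k β - α * besselJ k α * besselJ (k + 1) β := by
  rw [(hasDerivAt_besselJ_succ k hβ).deriv, (hasDerivAt_besselJ_succ k hα).deriv]
  field_simp
  ring

noncomputable def besselField (k : ℕ) (t : ℝ) (p : ℝ × ℝ) : ℝ × ℝ :=
  (k / t * p.1 - p.2, p.1 - (k + 1) / t * p.2)

theorem abs_mul_sub_le {c u w C M : ℝ} (hc : |c| ≤ C) (hu : |u| ≤ M) (hw : |w| ≤ M) :
    |c * u - w| ≤ (C + 1) * M :=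
  calc |c * u - w| ≤ |c| * |u| + |w| := by rw [← abs_mul]; exact abs_sub _ _
    _ ≤ C * M + M := by gcongr; exact (abs_nonneg c).trans hc
    _ = (C + 1) * M := by ring

theorem lipschitzWith_besselField (k : ℕ) {ε t : ℝ} (hε : 0 < ε) (ht : ε ≤ t) :
    LipschitzWith (Real.toNNReal ((k + 1) / ε + 1)) (besselField k t) := by
  have hcoeff : ∀ c : ℝ, 0 ≤ c → c ≤ k + 1 → |c / t| ≤ (k + 1) / ε := fun c hc0 hc => by
    rw [abs_of_nonneg (div_nonneg hc0 (hε.le.trans ht))]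
    exact div_le_div₀ (by positivity) hc hε ht
  refine LipschitzWith.of_dist_le_mul fun p q => ?_
  have h₁ : |p.1 - q.1| ≤ dist p q := by
    rw [Prod.dist_eq, ← Real.dist_eq]; exact le_max_left _ _
  have h₂ : |p.2 - q.2| ≤ dist p q := by
    rw [Prod.dist_eq, ← Real.dist_eq]; exact le_max_right _ _
  rw [Real.coe_toNNReal _ (by positivity), Prod.dist_eq, Real.dist_eq, Real.dist_eq]
  refine max_le ?_ ?_
  · calc |(k / t * p.1 - p.2) - (k / t * q.1 - q.2)| = |k / t * (p.1 - q.1) - (p.2 - q.2)| := by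
          ring_nf
      _ ≤ _ := abs_mul_sub_le (hcoeff k (by positivity) (by linarith)) h₁ h₂
  · calc |(p.1 - (k + 1) / t * p.2) - (q.1 - (k + 1) / t * q.2)| =
          |(k + 1) / t * (p.2 - q.2) - (p.1 - q.1)| := by
          rw [abs_sub_comm]; ring_nf
      _ ≤ _ := abs_mul_sub_le (hcoeff (k + 1) (by positivity) le_rfl) h₂ h₁

theorem hasDerivAt_besselJ_prod (k : ℕ) {t : ℝ} (ht : t ≠ 0) :
    HasDerivAt (fun x => (besselJ k x, besselJ (k + 1) x))
      (besselField k t (besselJ k t, besselJ (k + 1) t)) t :=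
  (hasDerivAt_besselJ k ht).prodMk (hasDerivAt_besselJ_succ k ht)

theorem besselJ_eqOn_zero_of_common_zero (k : ℕ) {x₀ : ℝ} (h₀ : besselJ k x₀ = 0)
    (h₁ : besselJ (k + 1) x₀ = 0) : EqOn (besselJ k) 0 (Ioc 0 x₀) := fun ε hε => by
  have hsol := ODE_solution_unique_of_mem_Icc_left (v := besselField k) (s := fun _ => univ)
    (g := fun _ => 0)
    (fun t ht => (lipschitzWith_besselField k hε.1 ht.1.le).lipschitzOnWith)
    ((continuous_besselJ k).prodMk (continuous_besselJ (k + 1))).continuousOn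
    (fun t ht => (hasDerivAt_besselJ_prod k (hε.1.trans ht.1).ne').hasDerivWithinAt)
    (fun _ _ => mem_univ _) continuousOn_const
    (fun t _ => by
      rw [show besselField k t 0 = 0 by ext <;> simp [besselField]]
      exact (hasDerivAt_const t _).hasDerivWithinAt)
    (fun _ _ => mem_univ _) (by simp [h₀, h₁]) (left_mem_Icc.2 hε.2)
  exact congrArg Prod.fst hsol

theorem not_eqOn_besselJ_zero (k : ℕ) {b : ℝ} (hb : 0 < b) : ¬EqOn (besselJ k) 0 (Ioo 0 b) := by
  induction k with
  | zero =>
    intro h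
    have hne : ∀ᶠ t in 𝓝[>] 0, besselJ 0 t ≠ 0 := nhdsWithin_le_nhds <|
      (continuous_besselJ 0).continuousAt.eventually_ne (by norm_num [besselJ_zero_zero])
    obtain ⟨t, ht0, ht⟩ := (hne.and (Ioo_mem_nhdsGT hb)).exists
    exact ht0 (h ht)
  | succ k ih =>
    intro h
    refine ih fun t ht => ?_
    have hzero : besselJ (k + 1) =ᶠ[𝓝 t] fun _ => 0 := eventually_of_mem (Ioo_mem_nhds ht.1 ht.2) h
    have hderiv := (hasDerivAt_besselJ_succ k ht.1.ne').unique
      ((hasDerivAt_const t 0).congr_of_eventuallyEq hzero)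
    simpa [h ht] using hderiv

theorem besselJ_ne_zero_or_besselJ_succ_ne_zero (k : ℕ) {x : ℝ} (hx : 0 < x) :
    besselJ k x ≠ 0 ∨ besselJ (k + 1) x ≠ 0 := by
  by_contra! h
  exact not_eqOn_besselJ_zero k hx fun t ht =>
    besselJ_eqOn_zero_of_common_zero k h.1 h.2 (Ioo_subset_Ioc_self ht)

theorem cross_system_eq_zero_iff {α β a b c d : ℝ} (hαβ : α ^ 2 ≠ β ^ 2) (hab : a ≠ 0 ∨ b ≠ 0)
    (hcd : c ≠ 0 ∨ d ≠ 0) :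
    (α * c * b - β * a * d = 0 ∧ β * b * c - α * a * d = 0) ↔
      (a = 0 ∧ c = 0) ∨ (b = 0 ∧ d = 0) := by
  have hsub : α ^ 2 - β ^ 2 ≠ 0 := sub_ne_zero.2 hαβ
  constructor
  · rintro ⟨h₁, h₂⟩
    have hbc : b * c = 0 := (mul_eq_zero.1
      (by linear_combination α * h₁ - β * h₂ : (α ^ 2 - β ^ 2) * (b * c) = 0)).resolve_left hsub
    have had : a * d = 0 := (mul_eq_zero.1
      (by linear_combination β * h₁ - α * h₂ : (α ^ 2 - β ^ 2) * (a * d) = 0)).resolve_left hsub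
    rcases mul_eq_zero.1 hbc with hb | hc
    · exact Or.inr ⟨hb, (mul_eq_zero.1 had).resolve_left (hab.resolve_right (not_not.2 hb))⟩
    · exact Or.inl ⟨(mul_eq_zero.1 had).resolve_right (hcd.resolve_left (not_not.2 hc)), hc⟩
  · rintro (⟨rfl, rfl⟩ | ⟨rfl, rfl⟩) <;> constructor <;> ring

theorem IsBesselZeros.besselJ_eq_zero_and_iff {k : ℕ} {j : ℕ → ℝ} (h : IsBesselZeros k j) {α β : ℝ}
    (hα : 0 < α) (hβ : 0 < β) (hαβ : α ≠ β) :
    (besselJ k α = 0 ∧ besselJ k β = 0) ↔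
      ∃ m n : ℕ, 1 ≤ m ∧ 1 ≤ n ∧ m ≠ n ∧ α = j n ∧ β = j m := by
  constructor
  · rintro ⟨hα0, hβ0⟩
    obtain ⟨n, hn, rfl⟩ := h.2.2 α hα hα0
    obtain ⟨m, hm, rfl⟩ := h.2.2 β hβ hβ0
    exact ⟨m, n, hm, hn, fun hmn => hαβ (hmn ▸ rfl), rfl, rfl⟩
  · rintro ⟨m, n, hm, hn, -, rfl, rfl⟩
    exact ⟨(h.1 n hn).2, (h.1 m hm).2⟩

/-- Characterization of the common positive roots (other than √κ) of `F_k` and `F_{k+1}`: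
they are exactly the `α` such that `α` and `κ/α` are two distinct positive zeros of the
same Bessel function `J_k` or `J_{k+1}`. -/
theorem common_root_Fk_Fk1 (k : ℕ) (κ α : ℝ) (hκ : 0 < κ) (hα : 0 < α)
    (hne : α ≠ Real.sqrt κ)
    (jk jk1 : ℕ → ℝ) (h1 : IsBesselZeros k jk) (h2 : IsBesselZeros (k + 1) jk1) :
    let F : ℕ → ℝ → ℝ := fun m a =>
      (κ / a) * besselJ m a * deriv (besselJ m) (κ / a)
        - a * besselJ m (κ / a) * deriv (besselJ m) a
    (F k α = 0 ∧ F (k + 1) α = 0) ↔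
      ∃ m n : ℕ, 1 ≤ m ∧ 1 ≤ n ∧ m ≠ n ∧
        ((α = jk n ∧ κ / α = jk m) ∨ (α = jk1 n ∧ κ / α = jk1 m)) := by
  intro F
  simp only [F]
  have hβ : 0 < κ / α := div_pos hκ hα
  have hαβ : α ≠ κ / α := fun h => hne <| by
    rw [eq_div_iff hα.ne'] at h
    rw [← h, Real.sqrt_mul_self hα.le]
  generalize κ / α = β at hβ hαβ ⊢
  rw [cross_deriv_besselJ_eq k hα.ne' hβ.ne', cross_deriv_besselJ_succ_eq k hα.ne' hβ.ne',
    cross_system_eq_zero_iff (by rwa [Ne, sq_eq_sq₀ hα.le hβ.le])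
      (besselJ_ne_zero_or_besselJ_succ_ne_zero k hα) (besselJ_ne_zero_or_besselJ_succ_ne_zero k hβ),
    h1.besselJ_eq_zero_and_iff hα hβ hαβ, h2.besselJ_eq_zero_and_iff hα hβ hαβ]
  simp only [and_or_left, exists_or]
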